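/- Let 𝔻 be an oriented ribbon graph and let e ∈ E(𝔻) be an edge that is neither a bridge nor a loop. Then the Bollobás–Riordan–Tutte polynomial satisfies the deletion–contraction relation C(𝔻; X, Y, Z) = C(𝔻 − e; X, Y, Z) + C(𝔻/e; X, Y, Z) in ℤ[X, Y, Z]. -/

import Mathlib

open Equiv Finset

/-- The number of orbits, i.e. classes of the equivalence relation generated by `r`. -/
noncomputable def orbCount {α : Type*} (r : α → α → Prop) : ℕ := Nat.card (Quot r)

variable {B : Type} [Fintype B] [DecidableEq B]

/-- The first-return map of a permutation `σ` of `B` to a subset `P ⊆ B`: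
`b ↦ σ^m b` for the minimal `m ≥ 1` with `σ^m b ∈ P`. -/
def firstRet (σ : Equiv.Perm B) (P : Finset B) (b : ↥P) : ↥P :=
  have h : ∃ m, 0 < m ∧ (σ ^ m) (b : B) ∈ P :=
    ⟨orderOf σ, orderOf_pos σ, by rw [pow_orderOf_eq_one]; simpa using b.2⟩
  ⟨(σ ^ Nat.find h) (b : B), (Nat.find_spec h).2⟩

/-- An oriented ribbon graph: a triple of permutations of a finite set `B` such that
`σ₁` is a fixed-point-free involution and `σ₀ ∘ σ₁ ∘ σ₂ = id`. -/
structure RibbonGraph (B : Type) [Fintype B] [DecidableEq B] where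
  s0 : Equiv.Perm B
  s1 : Equiv.Perm B
  s2 : Equiv.Perm B
  invol : ∀ b, s1 (s1 b) = b
  fpf : ∀ b, s1 b ≠ b
  triple : ∀ b, s0 (s1 (s2 b)) = b

namespace RibbonGraph

variable (D : RibbonGraph B)

/-- `v(𝔻)`: the number of orbits of `σ₀`. -/
noncomputable def vN : ℕ := orbCount fun a b : B => D.s0 a = b

/-- `e(𝔻)`: the number of orbits of `σ₁`. -/
noncomputable def eN : ℕ := orbCount fun a b : B => D.s1 a = b

/-- `f(𝔻)`: the number of orbits of `σ₂`. -/
noncomputable def fN : ℕ := orbCount fun a b : B => D.s2 a = b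

/-- `k(𝔻)`: the number of orbits of the subgroup generated by `σ₀` and `σ₁`. -/
noncomputable def kN : ℕ := orbCount fun a b : B => D.s0 a = b ∨ D.s1 a = b

/-- The genus `g(𝔻) = (2k − v + e − f)/2`. -/
noncomputable def gN : ℕ := (2 * D.kN + D.eN - D.vN - D.fN) / 2

/-- `𝔻` is connected if the subgroup generated by `σ₀` and `σ₁` acts transitively on `B`. -/
def Connected : Prop :=
  ∀ a b : B, ∃ g ∈ Subgroup.closure ({D.s0, D.s1} : Set (Equiv.Perm B)), g a = b

end RibbonGraph

/-- A ribbon graph together with the bookkeeping needed for spanning subgraphs,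
deletions and contractions: an ambient vertex permutation `s0` and edge involution `s1`
on `B`, and the set `act` of active half-edges (which is `s1`-invariant, `s1` being a
fixed-point-free involution on it).  The σ₀-orbits of `B` disjoint from `act` are the
isolated vertices; each contributes one vertex, one face and one connected component. -/
structure RG (B : Type) [Fintype B] [DecidableEq B] where
  act : Finset B
  s0 : Equiv.Perm B
  s1 : Equiv.Perm B
  invol : ∀ b, s1 (s1 b) = b
  fpf : ∀ b ∈ act, s1 b ≠ b
  closed : ∀ b ∈ act, s1 b ∈ act

/-- A plain ribbon graph, viewed with all of its half-edges active. -/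
def RibbonGraph.toRG (D : RibbonGraph B) : RG B :=
  ⟨Finset.univ, D.s0, D.s1, D.invol, fun b _ => D.fpf b, fun _ _ => Finset.mem_univ _⟩

namespace RG

variable (G : RG B)

/-- The edge (σ₁-orbit) `{a, σ₁ a}` of a half-edge `a`. -/
def edgeOf (a : B) : Finset B := {a, G.s1 a}

/-- The edge set `E(𝔻)`: the set of orbits `{b, σ₁ b}` of `σ₁`. -/
def edges : Finset (Finset B) := G.act.image G.edgeOf

/-- `e(𝔻)`: the number of edges. -/
def numE : ℕ := G.edges.card

/-- `v(𝔻)`: the number of vertices, i.e. of `σ₀`-orbits (first-return orbits on the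
active part together with the isolated vertices). -/
noncomputable def numV : ℕ := orbCount fun a b : B => G.s0 a = b

/-- The number of isolated vertices: `σ₀`-orbits of `B` disjoint from the active part. -/
noncomputable def isolated : ℕ :=
  Nat.card {x : Quot (fun a b : B => G.s0 a = b) // ∀ a : B, Quot.mk _ a = x → a ∉ G.act}

/-- The vertex permutation: first-return map of `σ₀` to the active half-edges. -/
def ret0 : ↥G.act → ↥G.act := firstRet G.s0 G.act

/-- The edge involution restricted to the active half-edges. -/
def ret1 : ↥G.act → ↥G.act := fun b => ⟨G.s1 b, G.closed b b.2⟩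

/-- `f(𝔻)`: the number of faces, i.e. orbits of the face permutation σ₂ = (σ₀σ₁)⁻¹
(an isolated vertex contributes one face). -/
noncomputable def numF : ℕ :=
  orbCount (fun a b : ↥G.act => G.ret0 (G.ret1 a) = b) + G.isolated

/-- `k(𝔻)`: the number of connected components (an isolated vertex is a component). -/
noncomputable def numK : ℕ :=
  orbCount (fun a b : ↥G.act => G.ret0 a = b ∨ G.ret1 a = b) + G.isolated

/-- The nullity `n(𝔻) = e(𝔻) − v(𝔻) + k(𝔻)`. -/
noncomputable def numN : ℕ := G.numE + G.numK - G.numV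

/-- The genus `g(𝔻) = (2k(𝔻) − v(𝔻) + e(𝔻) − f(𝔻))/2`. -/
noncomputable def genus : ℕ := (2 * G.numK + G.numE - G.numV - G.numF) / 2

/-- The spanning subgraph `H_S` determined by a set `S` of edges: the active half-edges
are those of `B_S = ⋃_{e ∈ S} e`; the ambient permutations are unchanged. -/
def spanning (S : Finset (Finset B)) : RG B where
  act := G.act.filter fun b => b ∈ S.biUnion id ∧ G.s1 b ∈ S.biUnion id
  s0 := G.s0
  s1 := G.s1
  invol := G.invol
  fpf := fun b hb => G.fpf b (Finset.mem_filter.1 hb).1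
  closed := by
    intro b hb
    rw [Finset.mem_filter] at hb ⊢
    exact ⟨G.closed b hb.1, hb.2.2, by rw [G.invol]; exact hb.2.1⟩

/-- The deletion `𝔻 − e` of the edge `e = {a, σ₁ a}`: the spanning subgraph on the
remaining edges. -/
def del (a : B) : RG B where
  act := G.act \ {a, G.s1 a}
  s0 := G.s0
  s1 := G.s1
  invol := G.invol
  fpf := fun b hb => G.fpf b (Finset.mem_sdiff.1 hb).1
  closed := by
    intro b hb
    rw [Finset.mem_sdiff, Finset.mem_insert, Finset.mem_singleton] at hb ⊢
    push_neg at hb ⊢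
    exact ⟨G.closed b hb.1,
      fun h => absurd (by rw [← h, G.invol] : b = G.s1 a) hb.2.2,
      fun h => absurd (G.s1.injective h) hb.2.1⟩

/-- The contraction `𝔻/e` of the edge `e = {a, σ₁ a}`: the two half-edges of `e` become
inactive and the vertex permutation becomes `τ = σ₀ ∘ (a, σ₁ a)`. -/
def contr (a : B) : RG B where
  act := G.act \ {a, G.s1 a}
  s0 := G.s0 * Equiv.swap a (G.s1 a)
  s1 := G.s1
  invol := G.invol
  fpf := fun b hb => G.fpf b (Finset.mem_sdiff.1 hb).1
  closed := by
    intro b hb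
    rw [Finset.mem_sdiff, Finset.mem_insert, Finset.mem_singleton] at hb ⊢
    push_neg at hb ⊢
    exact ⟨G.closed b hb.1,
      fun h => absurd (by rw [← h, G.invol] : b = G.s1 a) hb.2.2,
      fun h => absurd (G.s1.injective h) hb.2.1⟩

/-- The edge `{a, σ₁ a}` is a loop if its two half-edges lie in the same `σ₀`-orbit. -/
def IsLoop (a : B) : Prop := G.s0.SameCycle a (G.s1 a)

/-- The edge `{a, σ₁ a}` is a bridge if deleting it increases the number of connected
components by one. -/
noncomputable def IsBridge (a : B) : Prop := (G.del a).numK = G.numK + 1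

/-- `δ = −A² − A⁻²`. -/
noncomputable def lDelta : LaurentPolynomial ℤ :=
  -LaurentPolynomial.T 2 - LaurentPolynomial.T (-2)

/-- The Kauffman bracket of a ribbon graph:
`⟨𝔻⟩ = Σ_{S ⊆ E(𝔻)} A^{e(𝔻) − 2|S|} δ^{f(H_S) − 1}`. -/
noncomputable def bracket : LaurentPolynomial ℤ :=
  ∑ S ∈ G.edges.powerset,
    LaurentPolynomial.T ((G.numE : ℤ) - 2 * S.card) * lDelta ^ ((G.spanning S).numF - 1)

/-- The Bollobás–Riordan–Tutte polynomial (subgraph expansion), in variables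
`X = X₀`, `Y = X₁`, `Z = X₂`:
`C(𝔻; X, Y, Z) = Σ_{S ⊆ E(𝔻)} (X−1)^{k(H_S) − k(𝔻)} Y^{n(H_S)} Z^{g(H_S)}`. -/
noncomputable def brt : MvPolynomial (Fin 3) ℤ :=
  ∑ S ∈ G.edges.powerset,
    (MvPolynomial.X 0 - 1) ^ ((G.spanning S).numK - G.numK) *
      MvPolynomial.X 1 ^ (G.spanning S).numN *
      MvPolynomial.X 2 ^ (G.spanning S).genus

/-- Two half-edges lie in the same connected component (where an inactive half-edge
belongs to the isolated vertex given by its `σ₀`-orbit). -/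
def sameComp (x y : B) : Prop :=
  Relation.EqvGen (fun u v => G.s0 u = v ∨ (u ∈ G.act ∧ G.s1 u = v)) x y

/-- `M(H_S) = e(𝔻) − 2|S| + 2 f(H_S) − 2`, the maximal power of `A` contributed by the
spanning subgraph `H_S` to the Kauffman bracket. -/
noncomputable def mVal (S : Finset (Finset B)) : ℤ :=
  (G.numE : ℤ) - 2 * S.card + 2 * (G.spanning S).numF - 2

/-- The spanning trees of `𝔻`: edge sets `T` with `k(H_T) = 1` and `n(H_T) = 0`. -/
noncomputable def spanningTrees : Finset (Finset (Finset B)) :=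
  G.edges.powerset.filter fun T => (G.spanning T).numK = 1 ∧ (G.spanning T).numN = 0

/-- The number `i(T)` of internally active edges of `T`: edges `t ∈ T` that are
`≺`-minimal in their cut `{e ∈ E(𝔻) : k(H_{(T∖{t})∪{e}}) = 1}`. -/
noncomputable def numIntActive [LinearOrder (Finset B)] (T : Finset (Finset B)) : ℕ :=
  (T.filter fun t =>
    ∀ e ∈ G.edges, (G.spanning (insert e (T.erase t))).numK = 1 → t ≤ e).card

/-- The set `𝓔(T)` of externally active edges of `T`: edges `e ∉ T` that are
`≺`-minimal in `{f ∈ T ∪ {e} : k(H_{(T∪{e})∖{f}}) = 1}`. -/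
noncomputable def extActives [LinearOrder (Finset B)] (T : Finset (Finset B)) :
    Finset (Finset B) :=
  G.edges.filter fun e => e ∉ T ∧
    ∀ f ∈ insert e T, (G.spanning ((insert e T).erase f)).numK = 1 → e ≤ f

end RG

/-! ### Auxiliary machinery -/

section OrbAux

open Relation

variable {α : Type*}

lemma orbCount_congr {r r' : α → α → Prop}
    (h1 : ∀ a b, r a b → EqvGen r' a b) (h2 : ∀ a b, r' a b → EqvGen r a b) :
    orbCount r = orbCount r' := by
  refine Nat.card_congr ⟨Quot.lift (Quot.mk r') (fun u v h => Quot.eqvGen_sound (h1 u v h)),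
    Quot.lift (Quot.mk r) (fun u v h => Quot.eqvGen_sound (h2 u v h)), ?_, ?_⟩ <;>
    exact fun q => Quot.inductionOn q fun u => rfl

lemma orbCount_congr' {r r' : α → α → Prop} (h : ∀ a b, r a b ↔ r' a b) :
    orbCount r = orbCount r' :=
  Nat.card_congr (Quot.congrRight h)

lemma eqvGen_pow {r : α → α → Prop} (σ : Equiv.Perm α) (hr : ∀ u, r u (σ u)) (u : α) :
    ∀ n : ℕ, EqvGen r u ((σ ^ n) u)
  | 0 => by simpa using EqvGen.refl u
  | n + 1 => by
      rw [pow_succ, Equiv.Perm.mul_apply]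
      exact .trans _ _ _ (EqvGen.rel _ _ (hr u)) (eqvGen_pow σ hr (σ u) n)

open scoped Classical

lemma eqvGen_perm_iff_sameCycle [Finite α] (σ : Equiv.Perm α) (u v : α) :
    EqvGen (fun a b => σ a = b) u v ↔ σ.SameCycle u v := by
  constructor
  · intro h
    induction h with
    | rel a b h => exact ⟨1, by simpa using h⟩
    | refl a => exact Equiv.Perm.SameCycle.refl σ a
    | symm a b _ ih => exact ih.symm
    | trans a b c _ _ h1 h2 => exact h1.trans h2
  · intro h
    obtain ⟨i, _, rfl⟩ := h.exists_pow_eq'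
    exact eqvGen_pow σ (fun _ => rfl) u i

/-- Adding a single pair `(a, b)` as a generator to a relation either leaves the number of
equivalence classes unchanged (if `a` and `b` were already related) or decreases it by one. -/
lemma orbCount_add_gen [Finite α] {r : α → α → Prop} (a b : α) :
    orbCount r
      = orbCount (fun u v => r u v ∨ (u = a ∧ v = b) ∨ (u = b ∧ v = a))
        + (if EqvGen r a b then 0 else 1) := by
  classical
  set r' : α → α → Prop := fun u v => r u v ∨ (u = a ∧ v = b) ∨ (u = b ∧ v = a) with hr'
  by_cases hab : EqvGen r a b
  · rw [if_pos hab, add_zero]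
    refine orbCount_congr (fun u v h => EqvGen.rel _ _ (Or.inl h)) ?_
    rintro u v (h | ⟨rfl, rfl⟩ | ⟨rfl, rfl⟩)
    · exact EqvGen.rel _ _ h
    · exact hab
    · exact hab.symm _ _
  · rw [if_neg hab]
    -- the `Quot` of `r` maps onto `Option (Quot r')`, sending the class of `b` to `none`
    have hwd : ∀ u v, r u v →
        (if EqvGen r u b then (none : Option (Quot r')) else some (Quot.mk r' u))
          = (if EqvGen r v b then none else some (Quot.mk r' v)) := by
      intro u v h
      have hiff : EqvGen r u b ↔ EqvGen r v b :=
        ⟨fun h' => .trans _ _ _ (.symm _ _ (.rel _ _ h)) h',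
         fun h' => .trans _ _ _ (.rel _ _ h) h'⟩
      by_cases hu : EqvGen r u b
      · rw [if_pos hu, if_pos (hiff.1 hu)]
      · rw [if_neg hu, if_neg (fun h' => hu (hiff.2 h'))]
        exact congrArg some (Quot.sound (Or.inl h))
    set f : Quot r → Option (Quot r') :=
      Quot.lift (fun u => if EqvGen r u b then (none : Option (Quot r'))
        else some (Quot.mk r' u)) hwd with hf
    -- a "pair" bound for EqvGen r'
    have pairR : ∀ u v, EqvGen r' u v → EqvGen r u v ∨
        ((EqvGen r u a ∨ EqvGen r u b) ∧ (EqvGen r v a ∨ EqvGen r v b)) := by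
      intro u v h
      have hequiv : Equivalence (fun u v => EqvGen r u v ∨
          ((EqvGen r u a ∨ EqvGen r u b) ∧ (EqvGen r v a ∨ EqvGen r v b))) := by
        constructor
        · exact fun x => Or.inl (EqvGen.refl x)
        · rintro x y (h | ⟨h1, h2⟩)
          · exact Or.inl (h.symm _ _)
          · exact Or.inr ⟨h2, h1⟩
        · rintro x y z (h1 | ⟨h1, h1'⟩) (h2 | ⟨h2, h2'⟩)
          · exact Or.inl (h1.trans _ _ _ h2)
          · exact Or.inr ⟨h2.imp (h1.trans _ _ _) (h1.trans _ _ _), h2'⟩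
          · exact Or.inr ⟨h1, h1'.imp (fun h => (h2.symm _ _).trans _ _ _ h)
              (fun h => (h2.symm _ _).trans _ _ _ h)⟩
          · exact Or.inr ⟨h1, h2'⟩
      refine (Equivalence.eqvGen_iff hequiv).1 (EqvGen.mono ?_ _ _ h)
      rintro x y (h | ⟨rfl, rfl⟩ | ⟨rfl, rfl⟩)
      · exact Or.inl (EqvGen.rel _ _ h)
      · exact Or.inr ⟨Or.inl (EqvGen.refl _), Or.inr (EqvGen.refl _)⟩
      · exact Or.inr ⟨Or.inr (EqvGen.refl _), Or.inl (EqvGen.refl _)⟩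
    have hbij : Function.Bijective f := by
      constructor
      · refine Quot.ind fun u => Quot.ind fun v h => ?_
        by_cases hu : EqvGen r u b <;> by_cases hv : EqvGen r v b <;>
          simp only [hf, Quot.lift_mk, if_pos, if_neg, hu, hv, ite_true, ite_false] at h
        · exact Quot.eqvGen_sound (hu.trans _ _ _ (hv.symm _ _))
        · exact absurd h (by simp)
        · exact absurd h (by simp)
        · rcases pairR u v (Quot.eqvGen_exact (Option.some_injective _ h)) with h' | ⟨h1, h2⟩
          · exact Quot.eqvGen_sound h'
          · rcases h1 with h1 | h1
            · rcases h2 with h2 | h2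
              · exact Quot.eqvGen_sound (h1.trans _ _ _ (h2.symm _ _))
              · exact absurd h2 hv
            · exact absurd h1 hu
      · rintro (_ | d)
        · exact ⟨Quot.mk r b, by simp [hf, EqvGen.refl]⟩
        · refine Quot.inductionOn d fun u => ?_
          by_cases hu : EqvGen r u b
          · refine ⟨Quot.mk r a, ?_⟩
            simp only [hf, Quot.lift_mk, if_neg hab]
            refine congrArg some ?_
            have h1 : EqvGen r' a b := EqvGen.rel _ _ (Or.inr (Or.inl ⟨rfl, rfl⟩))
            have h2 : EqvGen r' u b := Relation.EqvGen.mono (fun x y h => Or.inl h) _ _ hu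
            exact Quot.eqvGen_sound (h1.trans _ _ _ (h2.symm _ _))
          · exact ⟨Quot.mk r u, by simp [hf, if_neg hu]⟩
    have h1 : Nat.card (Quot r) = Nat.card (Option (Quot r')) := Nat.card_eq_of_bijective f hbij
    rw [orbCount, orbCount, h1, Finite.card_option]

end OrbAux

section SwapAux

open Relation

variable {α : Type*} [Fintype α] [DecidableEq α]

/-- Multiplying by a transposition whose endpoints lie in different cycles joins
the two cycles: the endpoints become members of one cycle. -/
lemma sameCycle_mul_swap (σ : Equiv.Perm α) {a b : α} (hab : a ≠ b)
    (h : ¬ σ.SameCycle a b) : (σ * Equiv.swap a b).SameCycle a b := by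
  set t := σ * Equiv.swap a b with ht
  have hn : ∃ n, 0 < n ∧ (σ ^ n) b = b :=
    ⟨orderOf σ, orderOf_pos σ, by rw [pow_orderOf_eq_one]; rfl⟩
  set n := Nat.find hn with hndef
  have hn1 : 0 < n := (Nat.find_spec hn).1
  have hnb : (σ ^ n) b = b := (Nat.find_spec hn).2
  have key : ∀ j, j ≤ n → 1 ≤ j → (t ^ j) a = (σ ^ j) b := by
    intro j hj h1
    induction j with
    | zero => omega
    | succ k ih =>
      rcases Nat.eq_zero_or_pos k with rfl | hk
      · simp [ht, Equiv.Perm.mul_apply, Equiv.swap_apply_left]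
      · have hk' : (t ^ k) a = (σ ^ k) b := ih (by omega) hk
        have hne1 : (σ ^ k) b ≠ a := by
          intro hc
          exact h (Equiv.Perm.SameCycle.symm ⟨(k : ℤ), by simpa using hc⟩)
        have hne2 : (σ ^ k) b ≠ b := by
          intro hc
          exact Nat.find_min hn (by omega : k < n) ⟨hk, hc⟩
        rw [pow_succ', Equiv.Perm.mul_apply, hk', pow_succ', Equiv.Perm.mul_apply]
        show σ ((Equiv.swap a b) ((σ ^ k) b)) = _
        rw [Equiv.swap_apply_of_ne_of_ne hne1 hne2, Equiv.Perm.mul_apply]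
  exact ⟨(n : ℤ), by rw [zpow_natCast, key n le_rfl hn1, hnb]⟩

/-- Multiplying by a transposition whose endpoints lie in different cycles of `σ`
merges two orbits into one. -/
lemma orbCount_mul_swap (σ : Equiv.Perm α) {a b : α} (hab : a ≠ b)
    (h : ¬ σ.SameCycle a b) :
    orbCount (fun u v => σ u = v)
      = orbCount (fun u v => (σ * Equiv.swap a b) u = v) + 1 := by
  set t := σ * Equiv.swap a b with ht
  have hta : t a = σ b := by simp [ht, Equiv.Perm.mul_apply, Equiv.swap_apply_left]
  have htb : t b = σ a := by simp [ht, Equiv.Perm.mul_apply, Equiv.swap_apply_right]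
  have htu : ∀ u, u ≠ a → u ≠ b → t u = σ u := fun u h1 h2 => by
    simp [ht, Equiv.Perm.mul_apply, Equiv.swap_apply_of_ne_of_ne h1 h2]
  have e1 := orbCount_add_gen (α := α) (r := fun u v => σ u = v) a b
  have e2 := orbCount_add_gen (α := α) (r := fun u v => t u = v) a b
  rw [if_neg (fun hc => h ((eqvGen_perm_iff_sameCycle σ a b).1 hc))] at e1
  rw [if_pos ((eqvGen_perm_iff_sameCycle t a b).2 (sameCycle_mul_swap σ hab h)), add_zero] at e2
  have e3 : orbCount (fun u v => σ u = v ∨ (u = a ∧ v = b) ∨ (u = b ∧ v = a))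
      = orbCount (fun u v => t u = v ∨ (u = a ∧ v = b) ∨ (u = b ∧ v = a)) := by
    have pab : EqvGen (fun u v => t u = v ∨ (u = a ∧ v = b) ∨ (u = b ∧ v = a)) a b :=
      EqvGen.rel _ _ (Or.inr (Or.inl ⟨rfl, rfl⟩))
    have pab' : EqvGen (fun u v => σ u = v ∨ (u = a ∧ v = b) ∨ (u = b ∧ v = a)) a b :=
      EqvGen.rel _ _ (Or.inr (Or.inl ⟨rfl, rfl⟩))
    refine orbCount_congr ?_ ?_
    · rintro u v (rfl | hp)
      · by_cases h1 : u = a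
        · subst h1
          exact pab.trans _ _ _ (EqvGen.rel _ _ (Or.inl htb))
        · by_cases h2 : u = b
          · subst h2
            exact (pab.symm _ _).trans _ _ _ (EqvGen.rel _ _ (Or.inl hta))
          · exact EqvGen.rel _ _ (Or.inl (htu u h1 h2))
      · exact EqvGen.rel _ _ (Or.inr hp)
    · rintro u v (rfl | hp)
      · by_cases h1 : u = a
        · subst h1
          rw [hta]
          exact pab'.trans _ _ _ (EqvGen.rel _ _ (Or.inl rfl))
        · by_cases h2 : u = b
          · subst h2
            rw [htb]
            exact (pab'.symm _ _).trans _ _ _ (EqvGen.rel _ _ (Or.inl rfl))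
          · rw [htu u h1 h2]
            exact EqvGen.rel _ _ (Or.inl rfl)
      · exact EqvGen.rel _ _ (Or.inr hp)
  omega

end SwapAux

section Master

open Relation

variable {B : Type} [Fintype B] [DecidableEq B]

lemma pow_agree {π π₀ : Equiv.Perm B} {P : Finset B} (h0 : ∀ u ∉ P, π u = π₀ u) {u : B}
    (hu : ∀ k, (π₀ ^ k) u ∉ P) : ∀ k, (π ^ k) u = (π₀ ^ k) u
  | 0 => rfl
  | k + 1 => by
      rw [pow_succ', Equiv.Perm.mul_apply, pow_agree h0 hu k, h0 _ (hu k),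
        ← Equiv.Perm.mul_apply, ← pow_succ']

lemma reach_agree {π π₀ : Equiv.Perm B} {P : Finset B} (h0 : ∀ u ∉ P, π u = π₀ u) (u : B) :
    (∃ m, (π ^ m) u ∈ P) ↔ (∃ m, (π₀ ^ m) u ∈ P) := by
  have aux : ∀ (f g : Equiv.Perm B), (∀ u ∉ P, f u = g u) →
      (∃ m, (f ^ m) u ∈ P) → ∃ m, (g ^ m) u ∈ P := by
    rintro f g hfg ⟨m, hm⟩
    by_contra hng
    push_neg at hng
    rw [pow_agree hfg hng m] at hm
    exact hng m hm
  exact ⟨aux π π₀ h0, aux π₀ π (fun u hu => (h0 u hu).symm)⟩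

/-- The master orbit-counting lemma: the orbits of the equivalence generated by a
permutation `π` together with extra generators `E` supported inside a set `P` are counted
by the orbits of the first-return data on `P`, plus the `π₀`-orbits disjoint from `P`
(for any permutation `π₀` agreeing with `π` off `P`). -/
lemma orbCount_master (π π₀ : Equiv.Perm B) (P : Finset B) (E : B → B → Prop)
    (hE : ∀ u v, E u v → u ∈ P ∧ v ∈ P)
    (h0 : ∀ u ∉ P, π u = π₀ u) :
    orbCount (fun u v => π u = v ∨ E u v)
      = orbCount (fun x y : ↥P => firstRet π P x = y ∨ E ↑x ↑y)
        + Nat.card {x : Quot (fun a b : B => π₀ a = b) // ∀ a : B, Quot.mk _ a = x → a ∉ P} := by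
  classical
  set R : B → B → Prop := fun u v => π u = v ∨ E u v with hRdef
  set q : ↥P → ↥P → Prop := fun x y => firstRet π P x = y ∨ E ↑x ↑y with hqdef
  have aux_iso : ∀ u : B, ¬(∃ m, (π ^ m) u ∈ P) →
      ∀ c : B, Quot.mk (fun a b : B => π₀ a = b) c = Quot.mk _ u → c ∉ P := by
    intro u hu c hc hcP
    have h1 : EqvGen (fun a b : B => π₀ a = b) c u := Quot.eqvGen_exact hc
    have h2 : π₀.SameCycle u c := ((eqvGen_perm_iff_sameCycle π₀ c u).1 h1).symm
    obtain ⟨i, _, hi⟩ := h2.exists_pow_eq'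
    exact (fun hc' => hu ((reach_agree h0 u).2 hc')) ⟨i, hi ▸ hcP⟩
  set g : B → Quot q ⊕ {x : Quot (fun a b : B => π₀ a = b) // ∀ a : B, Quot.mk _ a = x → a ∉ P} :=
    fun u =>
      if h : ∃ m, (π ^ m) u ∈ P then
        Sum.inl (Quot.mk q ⟨(π ^ Nat.find h) u, Nat.find_spec h⟩)
      else
        Sum.inr ⟨Quot.mk _ u, aux_iso u h⟩
    with hgdef
  -- well-definedness data for π-steps within the reachable region
  have find_shift : ∀ (u : B) (hu : ∃ m, (π ^ m) u ∈ P) (hv : ∃ m, (π ^ m) (π u) ∈ P),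
      Quot.mk q ⟨(π ^ Nat.find hu) u, Nat.find_spec hu⟩
        = Quot.mk q ⟨(π ^ Nat.find hv) (π u), Nat.find_spec hv⟩ := by
    intro u hu hv
    by_cases hP : u ∈ P
    · have h1 : Nat.find hu = 0 := (Nat.find_eq_zero hu).2 (by simpa using hP)
      have hfr : ∃ m, 0 < m ∧ (π ^ m) (u : B) ∈ P :=
        ⟨orderOf π, orderOf_pos π, by rw [pow_orderOf_eq_one]; simpa using hP⟩
      have e1 : Nat.find hfr = Nat.find hv + 1 := by
        apply le_antisymm
        · exact Nat.find_le ⟨Nat.succ_pos _,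
            by rw [pow_succ, Equiv.Perm.mul_apply]; exact Nat.find_spec hv⟩
        · have h2 : 0 < Nat.find hfr := (Nat.find_spec hfr).1
          have h3 : (π ^ (Nat.find hfr - 1)) (π u) ∈ P := by
            rw [← Equiv.Perm.mul_apply, ← pow_succ, Nat.sub_add_cancel h2]
            exact (Nat.find_spec hfr).2
          have h4 : Nat.find hv ≤ Nat.find hfr - 1 := Nat.find_le h3
          omega
      have helt : firstRet π P ⟨u, hP⟩ = ⟨(π ^ Nat.find hv) (π u), Nat.find_spec hv⟩ := by
        apply Subtype.ext
        show (π ^ Nat.find hfr) u = (π ^ Nat.find hv) (π u)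
        rw [e1, pow_succ, Equiv.Perm.mul_apply]
      calc Quot.mk q ⟨(π ^ Nat.find hu) u, Nat.find_spec hu⟩
          = Quot.mk q ⟨u, hP⟩ := by
            congr 1
            exact Subtype.ext (by show (π ^ Nat.find hu) u = u; rw [h1, pow_zero]; rfl)
        _ = Quot.mk q ⟨(π ^ Nat.find hv) (π u), Nat.find_spec hv⟩ :=
            Quot.sound (Or.inl helt)
    · have hu1 : 0 < Nat.find hu :=
        Nat.pos_of_ne_zero (fun h => hP (by simpa [h] using Nat.find_spec hu))
      have e1 : Nat.find hu = Nat.find hv + 1 := by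
        apply le_antisymm
        · exact Nat.find_le
            (by rw [pow_succ, Equiv.Perm.mul_apply]; exact Nat.find_spec hv)
        · have h3 : (π ^ (Nat.find hu - 1)) (π u) ∈ P := by
            rw [← Equiv.Perm.mul_apply, ← pow_succ, Nat.sub_add_cancel hu1]
            exact Nat.find_spec hu
          have h4 : Nat.find hv ≤ Nat.find hu - 1 := Nat.find_le h3
          omega
      congr 1
      exact Subtype.ext
        (by show (π ^ Nat.find hu) u = (π ^ Nat.find hv) (π u)
            rw [e1, pow_succ, Equiv.Perm.mul_apply])
  have hg : ∀ u v, R u v → g u = g v := by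
    rintro u v (rfl | hEuv)
    · by_cases hu : ∃ m, (π ^ m) u ∈ P
      · have hv : ∃ m, (π ^ m) (π u) ∈ P := by
          obtain ⟨m, hm⟩ := hu
          cases m with
          | zero =>
            refine ⟨orderOf π - 1, ?_⟩
            rw [← Equiv.Perm.mul_apply, ← pow_succ, Nat.sub_add_cancel (orderOf_pos π),
              pow_orderOf_eq_one]
            simpa using hm
          | succ k =>
            refine ⟨k, ?_⟩
            rw [← Equiv.Perm.mul_apply, ← pow_succ]
            exact hm
        rw [hgdef]
        dsimp only
        rw [dif_pos hu, dif_pos hv]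
        exact congrArg Sum.inl (find_shift u hu hv)
      · have hv : ¬ ∃ m, (π ^ m) (π u) ∈ P := by
          rintro ⟨m, hm⟩
          exact hu ⟨m + 1, by rw [pow_succ, Equiv.Perm.mul_apply]; exact hm⟩
        have huP : u ∉ P := fun h => hu ⟨0, by simpa using h⟩
        rw [hgdef]
        dsimp only
        rw [dif_neg hu, dif_neg hv]
        exact congrArg Sum.inr (Subtype.ext (Quot.sound ((h0 u huP).symm : π₀ u = π u)))
    · obtain ⟨huP, hvP⟩ := hE u v hEuv
      have hu : ∃ m, (π ^ m) u ∈ P := ⟨0, by simpa using huP⟩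
      have hv : ∃ m, (π ^ m) v ∈ P := ⟨0, by simpa using hvP⟩
      rw [hgdef]
      dsimp only
      rw [dif_pos hu, dif_pos hv]
      refine congrArg Sum.inl ?_
      calc Quot.mk q ⟨(π ^ Nat.find hu) u, Nat.find_spec hu⟩
          = Quot.mk q ⟨u, huP⟩ := by
            congr 1
            exact Subtype.ext (by show (π ^ Nat.find hu) u = u
                                  rw [(Nat.find_eq_zero hu).2 (by simpa using huP), pow_zero]
                                  rfl)
        _ = Quot.mk q ⟨v, hvP⟩ := Quot.sound (Or.inr hEuv)
        _ = Quot.mk q ⟨(π ^ Nat.find hv) v, Nat.find_spec hv⟩ := by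
            congr 1
            exact Subtype.ext (by show (v : B) = (π ^ Nat.find hv) v
                                  rw [(Nat.find_eq_zero hv).2 (by simpa using hvP), pow_zero]
                                  rfl)
  -- `EqvGen q` maps into `EqvGen R` on representatives
  have hqR : ∀ x y : ↥P, EqvGen q x y → EqvGen R (↑x) (↑y) := by
    intro x y h
    induction h with
    | rel x y h =>
      rcases h with h | h
      · have hx : ∃ m, 0 < m ∧ (π ^ m) (↑x : B) ∈ P :=
          ⟨orderOf π, orderOf_pos π, by rw [pow_orderOf_eq_one]; simpa using x.2⟩
        have hval : (↑y : B) = (π ^ Nat.find hx) ↑x := by rw [← h]; rfl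
        rw [hval]
        exact eqvGen_pow (r := R) π (fun w => Or.inl rfl) _ _
      · exact EqvGen.rel _ _ (Or.inr h)
    | refl x => exact EqvGen.refl _
    | symm x y _ ih => exact ih.symm _ _
    | trans x y z _ _ ih1 ih2 => exact ih1.trans _ _ _ ih2
  have hginj : ∀ u v, g u = g v → Quot.mk R u = Quot.mk R v := by
    intro u v huv
    by_cases hu : ∃ m, (π ^ m) u ∈ P <;> by_cases hv : ∃ m, (π ^ m) v ∈ P <;>
      rw [hgdef] at huv <;> dsimp only at huv
    · rw [dif_pos hu, dif_pos hv] at huv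
      have h1 : EqvGen q ⟨(π ^ Nat.find hu) u, Nat.find_spec hu⟩
          ⟨(π ^ Nat.find hv) v, Nat.find_spec hv⟩ :=
        Quot.eqvGen_exact (Sum.inl_injective huv)
      have h2 : EqvGen R ((π ^ Nat.find hu) u) ((π ^ Nat.find hv) v) := hqR _ _ h1
      have h3 : EqvGen R u ((π ^ Nat.find hu) u) :=
        eqvGen_pow (r := R) π (fun w => Or.inl rfl) _ _
      have h4 : EqvGen R v ((π ^ Nat.find hv) v) :=
        eqvGen_pow (r := R) π (fun w => Or.inl rfl) _ _
      exact Quot.eqvGen_sound ((h3.trans _ _ _ h2).trans _ _ _ (h4.symm _ _))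
    · rw [dif_pos hu, dif_neg hv] at huv
      exact absurd huv (by simp)
    · rw [dif_neg hu, dif_pos hv] at huv
      exact absurd huv (by simp)
    · rw [dif_neg hu, dif_neg hv] at huv
      have h1 : Quot.mk (fun a b : B => π₀ a = b) u = Quot.mk _ v :=
        congrArg Subtype.val (Sum.inr_injective huv)
      have h2 : π₀.SameCycle u v := (eqvGen_perm_iff_sameCycle π₀ u v).1 (Quot.eqvGen_exact h1)
      obtain ⟨i, _, hi⟩ := h2.exists_pow_eq'
      have hnr : ¬ ∃ m, (π₀ ^ m) u ∈ P := fun hc => hu ((reach_agree h0 u).2 hc)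
      have hall : ∀ k, (π₀ ^ k) u ∉ P := fun k hk => hnr ⟨k, hk⟩
      have h5 : (π ^ i) u = v := by rw [pow_agree h0 hall i, hi]
      rw [← h5]
      exact Quot.eqvGen_sound (eqvGen_pow (r := R) π (fun w => Or.inl rfl) _ _)
  have hgsurj : ∀ s, ∃ u, g u = s := by
    rintro (d | ⟨c, hc⟩)
    · refine Quot.inductionOn d fun x => ⟨(x : B), ?_⟩
      have hx : ∃ m, (π ^ m) (x : B) ∈ P := ⟨0, by simpa using x.2⟩
      rw [hgdef]
      dsimp only
      rw [dif_pos hx]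
      refine congrArg Sum.inl ?_
      congr 1
      exact Subtype.ext (by show (π ^ Nat.find hx) (x : B) = (x : B)
                            rw [(Nat.find_eq_zero hx).2 (by simpa using x.2), pow_zero]
                            rfl)
    · obtain ⟨u, rfl⟩ := Quot.exists_rep c
      have huP : u ∉ P := hc u rfl
      have hnr₀ : ¬ ∃ m, (π₀ ^ m) u ∈ P := by
        rintro ⟨m, hm⟩
        have : Quot.mk (fun a b : B => π₀ a = b) ((π₀ ^ m) u) = Quot.mk _ u :=
          (Quot.eqvGen_sound (eqvGen_pow (r := fun a b : B => π₀ a = b) π₀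
            (fun w => rfl) u m)).symm
        exact hc _ this hm
      have hnr : ¬ ∃ m, (π ^ m) u ∈ P := fun h => hnr₀ ((reach_agree h0 u).1 h)
      refine ⟨u, ?_⟩
      rw [hgdef]
      dsimp only
      rw [dif_neg hnr]
  have hbij : Function.Bijective (Quot.lift g hg) := by
    constructor
    · exact Quot.ind fun u => Quot.ind fun v h => hginj u v h
    · intro s
      obtain ⟨u, hu⟩ := hgsurj s
      exact ⟨Quot.mk R u, hu⟩
  rw [orbCount, orbCount, Nat.card_eq_of_bijective _ hbij, Nat.card_sum]

end Master

namespace RG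

open Relation

variable {B : Type} [Fintype B] [DecidableEq B]

lemma ext' (G₁ G₂ : RG B) (h1 : G₁.act = G₂.act) (h2 : G₁.s0 = G₂.s0) (h3 : G₁.s1 = G₂.s1) :
    G₁ = G₂ := by
  cases G₁
  cases G₂
  simp_all

/-- The permutation of `B` whose orbits are the faces of `G` together with the
isolated vertices: apply `σ₁` on active half-edges, then `σ₀`. -/
def psiPerm (G : RG B) : Equiv.Perm B :=
  G.s0 * Function.Involutive.toPerm (fun u => if u ∈ G.act then G.s1 u else u)
    (by
      intro u
      by_cases h : u ∈ G.act
      · simp only [if_pos h, if_pos (G.closed u h), G.invol]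
      · simp only [if_neg h])

lemma psiPerm_apply (G : RG B) (u : B) :
    G.psiPerm u = G.s0 (if u ∈ G.act then G.s1 u else u) := rfl

lemma psiPerm_eq_s0_off_act (G : RG B) (u : B) (h : u ∉ G.act) : G.psiPerm u = G.s0 u := by
  rw [psiPerm_apply, if_neg h]

/-- The first-return map of `ψ` to the active part is the face permutation. -/
lemma firstRet_psiPerm (G : RG B) (x : ↥G.act) :
    firstRet G.psiPerm G.act x = G.ret0 (G.ret1 x) := by
  set π := G.psiPerm with hπ
  have hψ : ∃ m, 0 < m ∧ (π ^ m) (x : B) ∈ G.act :=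
    ⟨orderOf π, orderOf_pos π, by rw [pow_orderOf_eq_one]; simpa using x.2⟩
  have hσ : ∃ m, 0 < m ∧ (G.s0 ^ m) (G.s1 (x : B)) ∈ G.act :=
    ⟨orderOf G.s0, orderOf_pos G.s0, by
      rw [pow_orderOf_eq_one]
      simpa using G.closed _ x.2⟩
  -- the iterates of `ψ` from `x` agree with the iterates of `σ₀` from `σ₁ x`
  have keyval : ∀ j, 1 ≤ j → j ≤ Nat.find hσ → (π ^ j) (x : B) = (G.s0 ^ j) (G.s1 x) := by
    intro j h1 h2
    induction j with
    | zero => omega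
    | succ k ih =>
      rcases Nat.eq_zero_or_pos k with rfl | hk
      · rw [pow_one, pow_one, psiPerm_apply, if_pos x.2]
      · have hk' : (π ^ k) (x : B) = (G.s0 ^ k) (G.s1 x) := ih (by omega) (by omega)
        have hkact : (G.s0 ^ k) (G.s1 (x : B)) ∉ G.act :=
          fun hc => Nat.find_min hσ (by omega : k < Nat.find hσ) ⟨hk, hc⟩
        rw [pow_succ', Equiv.Perm.mul_apply, hk', psiPerm_apply, if_neg hkact,
          pow_succ', Equiv.Perm.mul_apply]
  have hfind : Nat.find hψ = Nat.find hσ := by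
    apply le_antisymm
    · exact Nat.find_le ⟨(Nat.find_spec hσ).1, by
        rw [keyval _ (Nat.find_spec hσ).1 le_rfl]; exact (Nat.find_spec hσ).2⟩
    · by_contra hlt
      push_neg at hlt
      have h1 := (Nat.find_spec hψ).1
      have h2 := (Nat.find_spec hψ).2
      rw [keyval _ h1 (by omega)] at h2
      exact Nat.find_min hσ hlt ⟨h1, h2⟩
  apply Subtype.ext
  show (π ^ Nat.find hψ) (x : B) = (G.s0 ^ Nat.find hσ) ((G.ret1 x : B))
  have : ((G.ret1 x : B)) = G.s1 (x : B) := rfl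
  rw [this, hfind]
  exact keyval _ (Nat.find_spec hσ).1 le_rfl

/-- Characterization of the number of connected components as an orbit count on `B`. -/
lemma numK_eq (G : RG B) :
    G.numK = orbCount (fun u v => G.s0 u = v ∨ (u ∈ G.act ∧ G.s1 u = v)) := by
  have hm := orbCount_master (B := B) G.s0 G.s0 G.act (fun u v => u ∈ G.act ∧ G.s1 u = v)
    (fun u v h => ⟨h.1, h.2 ▸ G.closed u h.1⟩) (fun _ _ => rfl)
  rw [numK, hm]
  congr 1
  apply orbCount_congr'
  intro x y
  constructor
  · rintro (h | h)
    · exact Or.inl h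
    · exact Or.inr ⟨x.2, congrArg Subtype.val h⟩
  · rintro (h | h)
    · exact Or.inl h
    · exact Or.inr (Subtype.ext h.2)

/-- Characterization of the number of faces as an orbit count on `B`. -/
lemma numF_eq (G : RG B) :
    G.numF = orbCount (fun u v => G.psiPerm u = v) := by
  have hm := orbCount_master (B := B) G.psiPerm G.s0 G.act (fun _ _ => False)
    (fun u v h => h.elim) (fun u hu => G.psiPerm_eq_s0_off_act u hu)
  have h1 : orbCount (fun u v => G.psiPerm u = v)
      = orbCount (fun u v => G.psiPerm u = v ∨ False) :=
    orbCount_congr' (fun a b => by simp)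
  rw [numF, h1, hm]
  congr 1
  apply orbCount_congr'
  intro x y
  rw [or_false]
  constructor
  · intro h
    exact (G.firstRet_psiPerm x).trans h
  · intro h
    exact (G.firstRet_psiPerm x).symm.trans h

end RG

namespace RG

variable {B : Type} [Fintype B] [DecidableEq B] (G : RG B)

lemma mem_edgeOf_self (b : B) : b ∈ G.edgeOf b := Finset.mem_insert_self _ _

lemma s1_mem_edgeOf (b : B) : G.s1 b ∈ G.edgeOf b := by
  simp [edgeOf]

lemma mem_edgeOf_iff {b c : B} : c ∈ G.edgeOf b ↔ c = b ∨ c = G.s1 b := by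
  simp [edgeOf]

lemma edgeOf_eq_of_mem {c d : B} (h : d ∈ G.edgeOf c) : G.edgeOf d = G.edgeOf c := by
  rcases (G.mem_edgeOf_iff).1 h with rfl | rfl
  · rfl
  · show ({G.s1 c, G.s1 (G.s1 c)} : Finset B) = {c, G.s1 c}
    rw [G.invol, Finset.pair_comm]

lemma exists_rep_of_mem_edges {f : Finset B} (hf : f ∈ G.edges) :
    ∃ c ∈ G.act, f = G.edgeOf c := by
  obtain ⟨c, hc, rfl⟩ := Finset.mem_image.1 hf
  exact ⟨c, hc, rfl⟩

lemma mem_act_of_mem_edges {f : Finset B} (hf : f ∈ G.edges) {b : B} (hb : b ∈ f) :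
    b ∈ G.act := by
  obtain ⟨c, hc, rfl⟩ := G.exists_rep_of_mem_edges hf
  rcases (G.mem_edgeOf_iff).1 hb with rfl | rfl
  · exact hc
  · exact G.closed c hc

lemma s1_mem_of_mem_edges {f : Finset B} (hf : f ∈ G.edges) {b : B} (hb : b ∈ f) :
    G.s1 b ∈ f := by
  obtain ⟨c, hc, rfl⟩ := G.exists_rep_of_mem_edges hf
  rcases (G.mem_edgeOf_iff).1 hb with rfl | rfl
  · exact G.s1_mem_edgeOf b
  · rw [G.invol]
    exact G.mem_edgeOf_self c

lemma edgeOf_eq_of_mem_edges {f : Finset B} (hf : f ∈ G.edges) {b : B} (hb : b ∈ f) :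
    G.edgeOf b = f := by
  obtain ⟨c, hc, rfl⟩ := G.exists_rep_of_mem_edges hf
  exact G.edgeOf_eq_of_mem hb

lemma spanning_act {S : Finset (Finset B)} (hS : S ⊆ G.edges) :
    (G.spanning S).act = S.biUnion id := by
  ext b
  rw [spanning]
  simp only [Finset.mem_filter]
  constructor
  · rintro ⟨-, hb, -⟩
    exact hb
  · intro hb
    obtain ⟨f, hf, hbf⟩ := Finset.mem_biUnion.1 hb
    refine ⟨G.mem_act_of_mem_edges (hS hf) hbf, hb, ?_⟩
    exact Finset.mem_biUnion.2 ⟨f, hf, G.s1_mem_of_mem_edges (hS hf) hbf⟩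

lemma spanning_edges {S : Finset (Finset B)} (hS : S ⊆ G.edges) :
    (G.spanning S).edges = S := by
  have hact := G.spanning_act hS
  ext f
  rw [edges]
  constructor
  · intro hf
    obtain ⟨b, hb, rfl⟩ := Finset.mem_image.1 hf
    rw [hact] at hb
    obtain ⟨g, hg, hbg⟩ := Finset.mem_biUnion.1 hb
    have : (G.spanning S).edgeOf b = G.edgeOf b := rfl
    rw [this, G.edgeOf_eq_of_mem_edges (hS hg) hbg]
    exact hg
  · intro hf
    obtain ⟨c, hc, rfl⟩ := G.exists_rep_of_mem_edges (hS hf)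
    refine Finset.mem_image.2 ⟨c, ?_, rfl⟩
    rw [hact]
    exact Finset.mem_biUnion.2 ⟨_, hf, G.mem_edgeOf_self c⟩

lemma spanning_numE {S : Finset (Finset B)} (hS : S ⊆ G.edges) :
    (G.spanning S).numE = S.card := by
  rw [numE, G.spanning_edges hS]

lemma spanning_self : G.spanning G.edges = G := by
  refine ext' _ _ ?_ rfl rfl
  rw [spanning]
  ext b
  simp only [Finset.mem_filter]
  constructor
  · rintro ⟨hb, -⟩
    exact hb
  · intro hb
    have h1 : b ∈ G.edges.biUnion id :=
      Finset.mem_biUnion.2 ⟨G.edgeOf b, Finset.mem_image_of_mem _ hb, G.mem_edgeOf_self b⟩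
    have h2 : G.s1 b ∈ G.edges.biUnion id :=
      Finset.mem_biUnion.2 ⟨G.edgeOf b, Finset.mem_image_of_mem _ hb, G.s1_mem_edgeOf b⟩
    exact ⟨hb, h1, h2⟩

/-- `numV` of a spanning subgraph agrees with that of the ambient graph. -/
lemma spanning_numV (S : Finset (Finset B)) : (G.spanning S).numV = G.numV := rfl

end RG

namespace RG

variable {B : Type} [Fintype B] [DecidableEq B] (G : RG B) (a : B)

@[simp] lemma del_act : (G.del a).act = G.act \ {a, G.s1 a} := rfl
@[simp] lemma del_s0 : (G.del a).s0 = G.s0 := rfl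
@[simp] lemma del_s1 : (G.del a).s1 = G.s1 := rfl
@[simp] lemma contr_act : (G.contr a).act = G.act \ {a, G.s1 a} := rfl
@[simp] lemma contr_s0 : (G.contr a).s0 = G.s0 * Equiv.swap a (G.s1 a) := rfl
@[simp] lemma contr_s1 : (G.contr a).s1 = G.s1 := rfl
@[simp] lemma spanning_s0 (S : Finset (Finset B)) : (G.spanning S).s0 = G.s0 := rfl
@[simp] lemma spanning_s1 (S : Finset (Finset B)) : (G.spanning S).s1 = G.s1 := rfl
lemma spanning_act_def (S : Finset (Finset B)) :
    (G.spanning S).act = G.act.filter fun b => b ∈ S.biUnion id ∧ G.s1 b ∈ S.biUnion id := rfl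
@[simp] lemma edgeOf_def (b : B) : G.edgeOf b = {b, G.s1 b} := rfl
lemma contr_edges_eq_del_edges : (G.contr a).edges = (G.del a).edges := rfl
lemma contr_edgeOf (b : B) : (G.contr a).edgeOf b = G.edgeOf b := rfl
lemma del_edgeOf (b : B) : (G.del a).edgeOf b = G.edgeOf b := rfl

end RG

@[simp] lemma RibbonGraph.toRG_act {B : Type} [Fintype B] [DecidableEq B] (D : RibbonGraph B) :
    D.toRG.act = Finset.univ := rfl
@[simp] lemma RibbonGraph.toRG_s0 {B : Type} [Fintype B] [DecidableEq B] (D : RibbonGraph B) :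
    D.toRG.s0 = D.s0 := rfl
@[simp] lemma RibbonGraph.toRG_s1 {B : Type} [Fintype B] [DecidableEq B] (D : RibbonGraph B) :
    D.toRG.s1 = D.s1 := rfl

section Specific

open Relation

variable {B : Type} [Fintype B] [DecidableEq B] (D : RibbonGraph B) (a : B)

lemma toRG_edgeOf_mem : D.toRG.edgeOf a ∈ D.toRG.edges :=
  Finset.mem_image_of_mem _ (Finset.mem_univ a)

lemma toRG_del_edges :
    (D.toRG.del a).edges = D.toRG.edges.erase (D.toRG.edgeOf a) := by
  ext f
  rw [Finset.mem_erase]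
  constructor
  · intro hf
    obtain ⟨c, hc, rfl⟩ := Finset.mem_image.1 hf
    rw [RG.del_act] at hc
    simp only [Finset.mem_sdiff, Finset.mem_insert, Finset.mem_singleton,
      RibbonGraph.toRG_act, RibbonGraph.toRG_s1, Finset.mem_univ, true_and] at hc
    push_neg at hc
    refine ⟨?_, Finset.mem_image_of_mem _ (Finset.mem_univ c)⟩
    intro hEq
    have h1 : c ∈ D.toRG.edgeOf a := hEq ▸ D.toRG.mem_edgeOf_self c
    rcases (D.toRG.mem_edgeOf_iff).1 h1 with rfl | h2
    · exact hc.1 rfl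
    · exact hc.2 h2
  · rintro ⟨hne, hf⟩
    obtain ⟨c, -, rfl⟩ := D.toRG.exists_rep_of_mem_edges hf
    refine Finset.mem_image.2 ⟨c, ?_, rfl⟩
    rw [RG.del_act]
    simp only [Finset.mem_sdiff, Finset.mem_insert, Finset.mem_singleton,
      RibbonGraph.toRG_act, RibbonGraph.toRG_s1, Finset.mem_univ, true_and]
    push_neg
    constructor
    · rintro rfl; exact hne rfl
    · rintro hc
      subst hc
      exact hne (D.toRG.edgeOf_eq_of_mem (D.toRG.s1_mem_edgeOf a))

lemma toRG_contr_edges :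
    (D.toRG.contr a).edges = D.toRG.edges.erase (D.toRG.edgeOf a) := by
  rw [RG.contr_edges_eq_del_edges, toRG_del_edges]

/-- Half-edges in edges other than `e` avoid both endpoints of `e`. -/
lemma not_endpoints_of_mem {S : Finset (Finset B)}
    (hS : S ⊆ D.toRG.edges.erase (D.toRG.edgeOf a)) {b : B} (hb : b ∈ S.biUnion id) :
    b ≠ a ∧ b ≠ D.s1 a := by
  obtain ⟨f, hf, hbf⟩ := Finset.mem_biUnion.1 hb
  have hfe := hS hf
  rw [Finset.mem_erase] at hfe
  have heq : D.toRG.edgeOf b = f := D.toRG.edgeOf_eq_of_mem_edges hfe.2 hbf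
  constructor
  · rintro rfl
    exact hfe.1 heq.symm
  · rintro rfl
    rw [show D.toRG.edgeOf (D.s1 a) = D.toRG.edgeOf a from
      D.toRG.edgeOf_eq_of_mem (D.toRG.s1_mem_edgeOf a)] at heq
    exact hfe.1 heq.symm

/-- Spanning subgraphs avoiding `e` agree in `𝔻` and `𝔻 − e`. -/
lemma spanning_del_eq {S : Finset (Finset B)}
    (hS : S ⊆ D.toRG.edges.erase (D.toRG.edgeOf a)) :
    D.toRG.spanning S = (D.toRG.del a).spanning S := by
  refine RG.ext' _ _ ?_ rfl rfl
  rw [RG.spanning_act_def, RG.spanning_act_def]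
  ext b
  rw [Finset.mem_filter, Finset.mem_filter]
  simp only [Finset.mem_filter, RG.del_act, RG.del_s1, Finset.mem_sdiff,
    RibbonGraph.toRG_act, Finset.mem_univ, true_and, RibbonGraph.toRG_s1]
  constructor
  · rintro ⟨hb, hb'⟩
    have hne := not_endpoints_of_mem D a hS hb
    refine ⟨?_, hb, hb'⟩
    simp only [Finset.mem_insert, Finset.mem_singleton]
    push_neg
    exact hne
  · rintro ⟨-, hb, hb'⟩
    exact ⟨hb, hb'⟩

end Specific

section Specific2

open Relation

variable {B : Type} [Fintype B] [DecidableEq B] (D : RibbonGraph B) (a : B)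

lemma toRG_mem_act_insert {S : Finset (Finset B)} (b : B) :
    b ∈ (insert (D.toRG.edgeOf a) S).biUnion id ↔
      b = a ∨ b = D.s1 a ∨ b ∈ S.biUnion id := by
  rw [Finset.biUnion_insert]
  simp only [Finset.mem_union, RG.edgeOf_def, Finset.mem_insert, Finset.mem_singleton, id]
  constructor
  · rintro ((rfl | rfl) | h)
    · exact Or.inl rfl
    · exact Or.inr (Or.inl rfl)
    · exact Or.inr (Or.inr h)
  · rintro (rfl | rfl | h)
    · exact Or.inl (Or.inl rfl)
    · exact Or.inl (Or.inr rfl)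
    · exact Or.inr h

lemma s1_mem_biUnion {S : Finset (Finset B)} (hS : S ⊆ D.toRG.edges) {b : B}
    (hb : b ∈ S.biUnion id) : D.s1 b ∈ S.biUnion id := by
  obtain ⟨f, hf, hbf⟩ := Finset.mem_biUnion.1 hb
  exact Finset.mem_biUnion.2 ⟨f, hf, D.toRG.s1_mem_of_mem_edges (hS hf) hbf⟩

lemma psi_contr_eq {S : Finset (Finset B)}
    (hS : S ⊆ D.toRG.edges.erase (D.toRG.edgeOf a)) :
    (D.toRG.spanning (insert (D.toRG.edgeOf a) S)).psiPerm
      = ((D.toRG.contr a).spanning S).psiPerm := by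
  have hSe : S ⊆ D.toRG.edges := hS.trans (Finset.erase_subset _ _)
  have hins : insert (D.toRG.edgeOf a) S ⊆ D.toRG.edges :=
    Finset.insert_subset (toRG_edgeOf_mem D a) hSe
  have hS' : S ⊆ (D.toRG.contr a).edges := by rw [toRG_contr_edges]; exact hS
  have hactH := D.toRG.spanning_act hins
  have hactH' := (D.toRG.contr a).spanning_act hS'
  have hne : D.s1 a ≠ a := D.fpf a
  apply Equiv.ext
  intro u
  rw [RG.psiPerm_apply, RG.psiPerm_apply, hactH, hactH']
  show D.s0 _ = (D.s0 * Equiv.swap a (D.s1 a)) _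
  rw [Equiv.Perm.mul_apply]
  by_cases hu : u ∈ S.biUnion id
  · have humem : u ∈ (insert (D.toRG.edgeOf a) S).biUnion id :=
      (toRG_mem_act_insert D a u).2 (Or.inr (Or.inr hu))
    have hs1u : D.s1 u ∈ S.biUnion id := s1_mem_biUnion D hSe hu
    have h1 := not_endpoints_of_mem D a hS hs1u
    rw [if_pos humem, if_pos hu]
    show D.s0 (D.s1 u) = D.s0 (Equiv.swap a (D.s1 a) (D.s1 u))
    rw [Equiv.swap_apply_of_ne_of_ne h1.1 h1.2]
  · by_cases h1 : u = a
    · subst h1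
      have humem : u ∈ (insert (D.toRG.edgeOf u) S).biUnion id :=
        (toRG_mem_act_insert D u u).2 (Or.inl rfl)
      rw [if_pos humem, if_neg hu]
      show D.s0 (D.s1 u) = D.s0 (Equiv.swap u (D.s1 u) u)
      rw [Equiv.swap_apply_left]
    · by_cases h2 : u = D.s1 a
      · subst h2
        have humem : D.s1 a ∈ (insert (D.toRG.edgeOf a) S).biUnion id :=
          (toRG_mem_act_insert D a _).2 (Or.inr (Or.inl rfl))
        rw [if_pos humem, if_neg hu]
        show D.s0 (D.s1 (D.s1 a)) = D.s0 (Equiv.swap a (D.s1 a) (D.s1 a))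
        rw [Equiv.swap_apply_right, D.invol]
      · have humem : u ∉ (insert (D.toRG.edgeOf a) S).biUnion id := by
          rw [toRG_mem_act_insert]
          push_neg
          exact ⟨h1, h2, hu⟩
        rw [if_neg humem, if_neg hu]
        show D.s0 u = D.s0 (Equiv.swap a (D.s1 a) u)
        rw [Equiv.swap_apply_of_ne_of_ne h1 h2]

lemma numF_contr_eq {S : Finset (Finset B)}
    (hS : S ⊆ D.toRG.edges.erase (D.toRG.edgeOf a)) :
    (D.toRG.spanning (insert (D.toRG.edgeOf a) S)).numF
      = ((D.toRG.contr a).spanning S).numF := by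
  rw [RG.numF_eq, RG.numF_eq, psi_contr_eq D a hS]

lemma numV_contr_eq (hlp : ¬ D.toRG.IsLoop a) (S : Finset (Finset B)) :
    (D.toRG.spanning (insert (D.toRG.edgeOf a) S)).numV
      = ((D.toRG.contr a).spanning S).numV + 1 := by
  have h1 : (D.toRG.spanning (insert (D.toRG.edgeOf a) S)).numV
      = orbCount (fun u v : B => D.s0 u = v) := rfl
  have h2 : ((D.toRG.contr a).spanning S).numV
      = orbCount (fun u v : B => (D.s0 * Equiv.swap a (D.s1 a)) u = v) := rfl
  rw [h1, h2]
  exact orbCount_mul_swap D.s0 (fun h => D.fpf a h.symm) hlp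

lemma numE_contr_eq {S : Finset (Finset B)}
    (hS : S ⊆ D.toRG.edges.erase (D.toRG.edgeOf a)) :
    (D.toRG.spanning (insert (D.toRG.edgeOf a) S)).numE
      = ((D.toRG.contr a).spanning S).numE + 1 := by
  have hSe : S ⊆ D.toRG.edges := hS.trans (Finset.erase_subset _ _)
  have hins : insert (D.toRG.edgeOf a) S ⊆ D.toRG.edges :=
    Finset.insert_subset (toRG_edgeOf_mem D a) hSe
  have hS' : S ⊆ (D.toRG.contr a).edges := by rw [toRG_contr_edges]; exact hS
  have hnot : D.toRG.edgeOf a ∉ S := fun hc => (Finset.mem_erase.1 (hS hc)).1 rfl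
  rw [D.toRG.spanning_numE hins, (D.toRG.contr a).spanning_numE hS',
    Finset.card_insert_of_notMem hnot]

lemma numK_contr_eq (hlp : ¬ D.toRG.IsLoop a) {S : Finset (Finset B)}
    (hS : S ⊆ D.toRG.edges.erase (D.toRG.edgeOf a)) :
    (D.toRG.spanning (insert (D.toRG.edgeOf a) S)).numK
      = ((D.toRG.contr a).spanning S).numK := by
  have hSe : S ⊆ D.toRG.edges := hS.trans (Finset.erase_subset _ _)
  have hins : insert (D.toRG.edgeOf a) S ⊆ D.toRG.edges :=
    Finset.insert_subset (toRG_edgeOf_mem D a) hSe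
  have hS' : S ⊆ (D.toRG.contr a).edges := by rw [toRG_contr_edges]; exact hS
  have hactH := D.toRG.spanning_act hins
  have hactH' := (D.toRG.contr a).spanning_act hS'
  rw [RG.numK_eq, RG.numK_eq]
  have e1 : orbCount (fun u v : B => (D.toRG.spanning (insert (D.toRG.edgeOf a) S)).s0 u = v ∨
        (u ∈ (D.toRG.spanning (insert (D.toRG.edgeOf a) S)).act ∧
          (D.toRG.spanning (insert (D.toRG.edgeOf a) S)).s1 u = v))
      = orbCount (fun u v : B => D.s0 u = v ∨
        (u ∈ (insert (D.toRG.edgeOf a) S).biUnion id ∧ D.s1 u = v)) := by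
    apply orbCount_congr'
    intro u v
    rw [hactH]
    rfl
  have e2 : orbCount (fun u v : B => ((D.toRG.contr a).spanning S).s0 u = v ∨
        (u ∈ ((D.toRG.contr a).spanning S).act ∧ ((D.toRG.contr a).spanning S).s1 u = v))
      = orbCount (fun u v : B => (D.s0 * Equiv.swap a (D.s1 a)) u = v ∨
        (u ∈ S.biUnion id ∧ D.s1 u = v)) := by
    apply orbCount_congr'
    intro u v
    rw [hactH']
    rfl
  rw [e1, e2]
  set t := D.s0 * Equiv.swap a (D.s1 a) with htdef
  have hta : t a = D.s0 (D.s1 a) := by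
    rw [htdef, Equiv.Perm.mul_apply, Equiv.swap_apply_left]
  have htb : t (D.s1 a) = D.s0 a := by
    rw [htdef, Equiv.Perm.mul_apply, Equiv.swap_apply_right]
  have htu : ∀ u, u ≠ a → u ≠ D.s1 a → t u = D.s0 u := fun u h1 h2 => by
    rw [htdef, Equiv.Perm.mul_apply, Equiv.swap_apply_of_ne_of_ne h1 h2]
  have hamem : a ∈ (insert (D.toRG.edgeOf a) S).biUnion id :=
    (toRG_mem_act_insert D a a).2 (Or.inl rfl)
  have hbmem : D.s1 a ∈ (insert (D.toRG.edgeOf a) S).biUnion id :=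
    (toRG_mem_act_insert D a _).2 (Or.inr (Or.inl rfl))
  have keyH : EqvGen (fun u v : B => D.s0 u = v ∨
      (u ∈ (insert (D.toRG.edgeOf a) S).biUnion id ∧ D.s1 u = v)) a (D.s1 a) :=
    EqvGen.rel _ _ (Or.inr ⟨hamem, rfl⟩)
  have keyH' : EqvGen (fun u v : B => t u = v ∨ (u ∈ S.biUnion id ∧ D.s1 u = v)) a (D.s1 a) := by
    refine Relation.EqvGen.mono (fun x y h => Or.inl h) _ _ ?_
    exact (eqvGen_perm_iff_sameCycle t a (D.s1 a)).2
      (sameCycle_mul_swap D.s0 (fun h => D.fpf a h.symm) hlp)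
  apply orbCount_congr
  · rintro u v (rfl | ⟨hu, rfl⟩)
    · by_cases h1 : u = a
      · subst h1
        rw [← htb]
        exact keyH'.trans _ _ _ (EqvGen.rel _ _ (Or.inl rfl))
      · by_cases h2 : u = D.s1 a
        · subst h2
          rw [← hta]
          exact (keyH'.symm _ _).trans _ _ _ (EqvGen.rel _ _ (Or.inl rfl))
        · rw [← htu u h1 h2]
          exact EqvGen.rel _ _ (Or.inl rfl)
    · rcases (toRG_mem_act_insert D a u).1 hu with rfl | rfl | hu'
      · exact keyH'
      · rw [D.invol]
        exact keyH'.symm _ _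
      · exact EqvGen.rel _ _ (Or.inr ⟨hu', rfl⟩)
  · rintro u v (rfl | ⟨hu, rfl⟩)
    · by_cases h1 : u = a
      · subst h1
        rw [hta]
        exact keyH.trans _ _ _ (EqvGen.rel _ _ (Or.inl rfl))
      · by_cases h2 : u = D.s1 a
        · subst h2
          rw [htb]
          exact (keyH.symm _ _).trans _ _ _ (EqvGen.rel _ _ (Or.inl rfl))
        · rw [htu u h1 h2]
          exact EqvGen.rel _ _ (Or.inl rfl)
    · exact EqvGen.rel _ _ (Or.inr ⟨(toRG_mem_act_insert D a u).2 (Or.inr (Or.inr hu)), rfl⟩)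

end Specific2

section Specific3

open Relation

variable {B : Type} [Fintype B] [DecidableEq B] (D : RibbonGraph B) (a : B)

lemma numK_contr_ambient (hlp : ¬ D.toRG.IsLoop a) :
    (D.toRG.contr a).numK = D.toRG.numK := by
  have h := numK_contr_eq D a hlp (Finset.Subset.refl (D.toRG.edges.erase (D.toRG.edgeOf a)))
  rw [Finset.insert_erase (toRG_edgeOf_mem D a), D.toRG.spanning_self] at h
  have h2 : (D.toRG.contr a).spanning (D.toRG.edges.erase (D.toRG.edgeOf a))
      = D.toRG.contr a := by
    rw [← toRG_contr_edges]
    exact (D.toRG.contr a).spanning_self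
  rw [h2] at h
  exact h.symm

lemma numK_del_ambient (hbr : ¬ D.toRG.IsBridge a) :
    (D.toRG.del a).numK = D.toRG.numK := by
  classical
  set rdel : B → B → Prop :=
    fun u v => D.s0 u = v ∨ ((u ≠ a ∧ u ≠ D.s1 a) ∧ D.s1 u = v) with hrdel
  have h1 : (D.toRG.del a).numK = orbCount rdel := by
    rw [RG.numK_eq]
    apply orbCount_congr'
    intro u v
    rw [hrdel]
    simp only [RG.del_s0, RG.del_s1, RG.del_act, RibbonGraph.toRG_s0, RibbonGraph.toRG_s1,
      RibbonGraph.toRG_act, Finset.mem_sdiff, Finset.mem_univ, true_and, Finset.mem_insert,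
      Finset.mem_singleton, not_or]
  have h2 : D.toRG.numK
      = orbCount (fun u v => rdel u v ∨ (u = a ∧ v = D.s1 a) ∨ (u = D.s1 a ∧ v = a)) := by
    rw [RG.numK_eq]
    apply orbCount_congr'
    intro u v
    rw [hrdel]
    simp only [RibbonGraph.toRG_s0, RibbonGraph.toRG_s1, RibbonGraph.toRG_act,
      Finset.mem_univ, true_and]
    constructor
    · rintro (h | h)
      · exact Or.inl (Or.inl h)
      · by_cases hua : u = a
        · subst hua
          exact Or.inr (Or.inl ⟨rfl, h.symm⟩)
        · by_cases hub : u = D.s1 a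
          · subst hub
            refine Or.inr (Or.inr ⟨rfl, ?_⟩)
            rw [← h, D.invol]
          · exact Or.inl (Or.inr ⟨⟨hua, hub⟩, h⟩)
    · rintro ((h | ⟨-, h⟩) | ⟨rfl, rfl⟩ | ⟨rfl, rfl⟩)
      · exact Or.inl h
      · exact Or.inr h
      · exact Or.inr rfl
      · exact Or.inr (D.invol _)
  have h3 := orbCount_add_gen (r := rdel) a (D.s1 a)
  rw [← h2] at h3
  by_cases hcon : EqvGen rdel a (D.s1 a)
  · rw [if_pos hcon, add_zero] at h3
    rw [h1, h3]
  · rw [if_neg hcon] at h3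
    exact absurd (show (D.toRG.del a).numK = D.toRG.numK + 1 by rw [h1, h3]) hbr

end Specific3

section Specific4

variable {B : Type} [Fintype B] [DecidableEq B] (D : RibbonGraph B) (a : B)

lemma numN_contr_eq (hlp : ¬ D.toRG.IsLoop a) {S : Finset (Finset B)}
    (hS : S ⊆ D.toRG.edges.erase (D.toRG.edgeOf a)) :
    (D.toRG.spanning (insert (D.toRG.edgeOf a) S)).numN
      = ((D.toRG.contr a).spanning S).numN := by
  rw [RG.numN, RG.numN, numE_contr_eq D a hS, numK_contr_eq D a hlp hS,
    numV_contr_eq D a hlp S]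
  omega

lemma genus_contr_eq (hlp : ¬ D.toRG.IsLoop a) {S : Finset (Finset B)}
    (hS : S ⊆ D.toRG.edges.erase (D.toRG.edgeOf a)) :
    (D.toRG.spanning (insert (D.toRG.edgeOf a) S)).genus
      = ((D.toRG.contr a).spanning S).genus := by
  rw [RG.genus, RG.genus, numE_contr_eq D a hS, numK_contr_eq D a hlp hS,
    numV_contr_eq D a hlp S, numF_contr_eq D a hS]
  omega

end Specific4

theorem brt_deletion_contraction' {B : Type} [Fintype B] [DecidableEq B]
    (D : RibbonGraph B) (a : B)
    (hbr : ¬ D.toRG.IsBridge a) (hlp : ¬ D.toRG.IsLoop a) :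
    D.toRG.brt = (D.toRG.del a).brt + (D.toRG.contr a).brt := by
  classical
  have hmemE : D.toRG.edgeOf a ∈ D.toRG.edges := toRG_edgeOf_mem D a
  have hnotE' : D.toRG.edgeOf a ∉ D.toRG.edges.erase (D.toRG.edgeOf a) :=
    Finset.notMem_erase _ _
  have hedges : D.toRG.edges = insert (D.toRG.edgeOf a) (D.toRG.edges.erase (D.toRG.edgeOf a)) :=
    (Finset.insert_erase hmemE).symm
  have hKdel : (D.toRG.del a).numK = D.toRG.numK := numK_del_ambient D a hbr
  have hKcontr : (D.toRG.contr a).numK = D.toRG.numK := numK_contr_ambient D a hlp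
  rw [RG.brt, RG.brt, RG.brt, toRG_del_edges, toRG_contr_edges, hedges,
    Finset.erase_insert hnotE', Finset.powerset_insert, Finset.sum_union, Finset.sum_image]
  · refine congrArg₂ (· + ·) ?_ ?_
    · -- deletion part
      apply Finset.sum_congr rfl
      intro S hS
      have hS' : S ⊆ D.toRG.edges.erase (D.toRG.edgeOf a) := Finset.mem_powerset.1 hS
      rw [spanning_del_eq D a hS', hKdel]
    · -- contraction part
      apply Finset.sum_congr rfl
      intro S hS
      have hS' : S ⊆ D.toRG.edges.erase (D.toRG.edgeOf a) := Finset.mem_powerset.1 hS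
      rw [numK_contr_eq D a hlp hS', numN_contr_eq D a hlp hS', genus_contr_eq D a hlp hS',
        hKcontr]
  · -- injectivity of `insert e`
    intro S hS T hT h
    have hS' : S ⊆ D.toRG.edges.erase (D.toRG.edgeOf a) := Finset.mem_powerset.1 hS
    have hT' : T ⊆ D.toRG.edges.erase (D.toRG.edgeOf a) := Finset.mem_powerset.1 hT
    have h1 : D.toRG.edgeOf a ∉ S := fun hc => hnotE' (hS' hc)
    have h2 : D.toRG.edgeOf a ∉ T := fun hc => hnotE' (hT' hc)
    rw [← Finset.erase_insert h1, ← Finset.erase_insert h2, h]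
  · -- disjointness
    rw [Finset.disjoint_left]
    intro T hT hT'
    obtain ⟨S, hS, rfl⟩ := Finset.mem_image.1 hT'
    have : D.toRG.edgeOf a ∈ D.toRG.edges.erase (D.toRG.edgeOf a) :=
      Finset.mem_powerset.1 hT (Finset.mem_insert_self _ _)
    exact hnotE' this
/-- Deletion–contraction for the Bollobás–Riordan–Tutte polynomial: if the
edge `e = {a, σ₁ a}` is neither a bridge nor a loop, then
`C(𝔻) = C(𝔻 − e) + C(𝔻/e)`. -/
theorem brt_deletion_contraction (D : RibbonGraph B) (a : B)
    (hbr : ¬ D.toRG.IsBridge a) (hlp : ¬ D.toRG.IsLoop a) :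
    D.toRG.brt = (D.toRG.del a).brt + (D.toRG.contr a).brt := by
  exact brt_deletion_contraction' D a hbr hlp
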